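/- Let Π be a GEDP and Ψ the set of rules r in Π with empty positive head (head^+(r)=∅) such that head^-(r) ∩ body^-(r) ≠ ∅. Then Π and Π \ Ψ have the same answer sets. -/
import Mathlib


/-- Literals over atoms (ℕ): positive or explicitly negated. -/
inductive Lit where
  | pos : ℕ → Lit
  | neg : ℕ → Lit
deriving DecidableEq

/-- Explicit negation (¬¬L = L). -/
def Lit.compl : Lit → Lit
  | .pos n => .neg n
  | .neg n => .pos n

/-- A GEDP rule: head⁺ ; not head⁻ ← body⁺ , not body⁻. -/
structure Rule where
  headPos : Set Lit
  headNeg : Set Lit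
  bodyPos : Set Lit
  bodyNeg : Set Lit

abbrev Program := Set Rule

/-- A not-free rule: head ← body over literals. -/
structure NFRule where
  head : Set Lit
  body : Set Lit

/-- S satisfies a not-free rule. -/
def NFRule.sat (S : Set Lit) (r : NFRule) : Prop :=
  r.body ⊆ S → (r.head ∩ S).Nonempty

/-- Candidate for answer set of a not-free program: satisfies all rules and
    contains a complementary pair only if it is Lit (= Set.univ). -/
def candNF (P : Set NFRule) (S : Set Lit) : Prop :=
  (∀ r ∈ P, NFRule.sat S r) ∧ ((∃ L, L ∈ S ∧ Lit.compl L ∈ S) → S = Set.univ)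

/-- Answer set of a not-free program: a minimal candidate. -/
def isAnswerSetNF (P : Set NFRule) (S : Set Lit) : Prop :=
  candNF P S ∧ ∀ T, candNF P T → T ⊆ S → T = S

/-- Reduct Π^S of a GEDP. -/
def reduct (P : Program) (S : Set Lit) : Set NFRule :=
  { nr | ∃ r ∈ P, r.headNeg ⊆ S ∧ r.bodyNeg ∩ S = ∅ ∧ nr = ⟨r.headPos, r.bodyPos⟩ }

/-- Answer set of a GEDP. -/
def isAnswerSet (P : Program) (S : Set Lit) : Prop :=
  isAnswerSetNF (reduct P S) S

/-- Π is contradictory iff Lit is its answer set. -/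
def contradictory (P : Program) : Prop := isAnswerSet P Set.univ

/-- Π is consistent iff it has a consistent answer set. -/
def consistentProgram (P : Program) : Prop := ∃ S, isAnswerSet P S ∧ S ≠ Set.univ

def hasBody (r : Rule) : Prop := (r.bodyPos ∪ r.bodyNeg).Nonempty

/-- Rules of Π with (NAF-)literal (L if pos, not L otherwise) in the head and nonempty body. -/
def headOcc (P : Program) (L : Lit) (pos : Bool) : Set Rule :=
  {r ∈ P | (if pos then L ∈ r.headPos else L ∈ r.headNeg) ∧ hasBody r}

/-- f chooses one body element (literal: true, NAF-literal: false) from each rule of R. -/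
def isChoice (R : Set Rule) (f : Rule → Lit × Bool) : Prop :=
  ∀ r ∈ R, ((f r).2 = true ∧ (f r).1 ∈ r.bodyPos) ∨ ((f r).2 = false ∧ (f r).1 ∈ r.bodyNeg)

/-- AC completion rules: unfolding Σ₁;…;Σ_p ← ℓ into GEDP rules by choice functions. -/
def acRules (P : Program) : Program :=
  { r' | ∃ (L : Lit) (pos : Bool) (f : Rule → Lit × Bool),
      (headOcc P L pos).Nonempty ∧ isChoice (headOcc P L pos) f ∧
      r' = ⟨{l | ∃ r ∈ headOcc P L pos, f r = (l, true)},
            {l | ∃ r ∈ headOcc P L pos, f r = (l, false)},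
            (if pos then {L} else ∅),
            (if pos then ∅ else {L})⟩ }

def AC (P : Program) : Program := P ∪ acRules P

/-- Weak DC contrapositive of a rule. -/
def wdc (r : Rule) : Rule := ⟨r.bodyNeg, r.bodyPos, r.headNeg, r.headPos⟩

def WDC (P : Program) : Program := P ∪ wdc '' P

/-- Strong DC contrapositive of a rule. -/
def sdc (r : Rule) : Rule :=
  ⟨(Lit.compl '' r.bodyPos) ∪ r.bodyNeg, ∅, (Lit.compl '' r.headPos) ∪ r.headNeg, ∅⟩

def SDC (P : Program) : Program := P ∪ sdc '' P

/-- Weak DA completion rules: not Lᵢ ← Γ₁,…,Γ_p (resp. Lᵢ ← …), unfolded by choices. -/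
def wdaRules (P : Program) : Program :=
  { r' | ∃ (L : Lit) (pos : Bool) (f : Rule → Lit × Bool),
      (headOcc P L pos).Nonempty ∧ isChoice (headOcc P L pos) f ∧
      r' = ⟨(if pos then ∅ else {L}),
            (if pos then {L} else ∅),
            {l | ∃ r ∈ headOcc P L pos, f r = (l, false)},
            {l | ∃ r ∈ headOcc P L pos, f r = (l, true)}⟩ }

def WDA (P : Program) : Program := P ∪ wdaRules P

/-- Strong DA completion rules: ¬Lᵢ ← Γ₁,…,Γ_p (resp. Lᵢ ← …), unfolded by choices. -/
def sdaRules (P : Program) : Program :=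
  { r' | ∃ (L : Lit) (pos : Bool) (f : Rule → Lit × Bool),
      (headOcc P L pos).Nonempty ∧ isChoice (headOcc P L pos) f ∧
      r' = ⟨(if pos then {Lit.compl L} else {L}), ∅,
            {l | ∃ r ∈ headOcc P L pos, (f r = (Lit.compl l, true) ∨ f r = (l, false))},
            ∅⟩ }

def SDA (P : Program) : Program := P ∪ sdaRules P

/-- Default AC completion rules: AC rules with the default guard Δᵢ of one body Σᵢ. -/
def dacRules (P : Program) : Program :=
  { r' | ∃ (L : Lit) (pos : Bool) (f : Rule → Lit × Bool) (r0 : Rule),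
      r0 ∈ headOcc P L pos ∧ isChoice (headOcc P L pos) f ∧
      r' = ⟨{l | ∃ r ∈ headOcc P L pos, f r = (l, true)},
            {l | ∃ r ∈ headOcc P L pos, f r = (l, false)},
            (if pos then {L} else ∅),
            (if pos then ∅ else {L}) ∪ (Lit.compl '' r0.bodyPos) ∪ r0.bodyNeg⟩ }

def DAC (P : Program) : Program := P ∪ dacRules P

/-- Weak default DA completion rules: WDA rules with guard δʷ. -/
def wddaRules (P : Program) : Program :=
  { r' | ∃ (L : Lit) (pos : Bool) (f : Rule → Lit × Bool),
      (headOcc P L pos).Nonempty ∧ isChoice (headOcc P L pos) f ∧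
      r' = ⟨(if pos then ∅ else {L}),
            (if pos then {L} else ∅),
            {l | ∃ r ∈ headOcc P L pos, f r = (l, false)},
            {l | ∃ r ∈ headOcc P L pos, f r = (l, true)} ∪ {if pos then L else Lit.compl L}⟩ }

def WDDA (P : Program) : Program := P ∪ wddaRules P

/-- Strong default DA completion rules: SDA rules with guard δˢ. -/
def sddaRules (P : Program) : Program :=
  { r' | ∃ (L : Lit) (pos : Bool) (f : Rule → Lit × Bool),
      (headOcc P L pos).Nonempty ∧ isChoice (headOcc P L pos) f ∧
      r' = ⟨(if pos then {Lit.compl L} else {L}), ∅,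
            {l | ∃ r ∈ headOcc P L pos, (f r = (Lit.compl l, true) ∨ f r = (l, false))},
            {if pos then L else Lit.compl L}⟩ }

def SDDA (P : Program) : Program := P ∪ sddaRules P

/-- The fact L ←. -/
def factOf (L : Lit) : Rule := ⟨{L}, ∅, ∅, ∅⟩

def isFact (r : Rule) : Prop := r.bodyPos = ∅ ∧ r.bodyNeg = ∅

def isAtom (L : Lit) : Prop := ∃ n, L = Lit.pos n

/-- Positive disjunctive program: no default negation, only atoms. -/
def isPDP (P : Program) : Prop :=
  ∀ r ∈ P, r.headNeg = ∅ ∧ r.bodyNeg = ∅ ∧ (∀ L ∈ r.headPos ∪ r.bodyPos, isAtom L)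

def isEDP (P : Program) : Prop := ∀ r ∈ P, r.headNeg = ∅

lemma reduct_eq (P : Program) (S : Set Lit) :
    reduct (P \ {r ∈ P | r.headPos = ∅ ∧ (r.headNeg ∩ r.bodyNeg).Nonempty}) S = reduct P S := by
  ext nr
  constructor
  · rintro ⟨r, hr, h1, h2, h3⟩
    exact ⟨r, hr.1, h1, h2, h3⟩
  · rintro ⟨r, hr, h1, h2, h3⟩
    refine ⟨r, ⟨hr, ?_⟩, h1, h2, h3⟩
    rintro ⟨-, ⟨-, ⟨L, hL1, hL2⟩⟩⟩
    have : L ∈ r.bodyNeg ∩ S := ⟨hL2, h1 hL1⟩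
    rw [h2] at this
    exact this

/-- deleting rules with empty positive head whose NAF-head and
    NAF-body intersect preserves the answer sets. -/
theorem delete_redundant_rules_preserves_answer_sets (P : Program) :
    ∀ S : Set Lit,
      isAnswerSet P S ↔
        isAnswerSet (P \ {r ∈ P | r.headPos = ∅ ∧ (r.headNeg ∩ r.bodyNeg).Nonempty}) S := by
  intro S
  unfold isAnswerSet
  rw [reduct_eq]
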